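/- arXiv:1901.09489 — 2 statements merged into one kernel-verified Lean document; each statement's English description precedes it below -/
import Mathlib

section
/- For any two convex bodies K and L in ℝⁿ, there exist translates K̄ = K + x and L̄ = L + y such that K̄ and L̄ are at a dilation position, i.e., the origin lies in K̄ ∩ L̄ and r(K̄,L̄)·L̄ ⊆ K̄ ⊆ R(K̄,L̄)·L̄. -/
/-!
Write `r` and `R` for the relative inradius and outradius of `K` with respect to `L`. Both
extrema are attained, by compactness: `a + r • L ⊆ K ⊆ b + R • L` for some `a`, `b`. Then
`(a - b) + r • L ⊆ R • L`, and comparing the maxima of linear functionals over the convex body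
`L` on both sides gives `a - b = (R - r) • l` for some `l ∈ L`. Translating `L` by `-l` and `K`
by `-(a + r • l)` puts the origin into both and turns the two inclusions into
`r • L ⊆ K ⊆ R • L`, while `r` and `R` are translation invariant.
-/

open Pointwise

/-- The translateSet `x + K` of a set. -/
def translateSet {n : ℕ} (x : EuclideanSpace ℝ (Fin n)) (K : Set (EuclideanSpace ℝ (Fin n))) :
    Set (EuclideanSpace ℝ (Fin n)) := (fun y => x + y) '' K

/-- The inradius of `K` relative to `L`: the largest `t > 0` such that some translateSet of
`tL` is contained in `K`. -/
noncomputable def inradius {n : ℕ} (K L : Set (EuclideanSpace ℝ (Fin n))) : ℝ :=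
  sSup {t : ℝ | 0 < t ∧ ∃ x, translateSet x (t • L) ⊆ K}

/-- The outradius of `K` relative to `L`: the smallest `t > 0` such that some translateSet of
`tL` contains `K`. -/
noncomputable def outradius {n : ℕ} (K L : Set (EuclideanSpace ℝ (Fin n))) : ℝ :=
  sInf {t : ℝ | 0 < t ∧ ∃ x, K ⊆ translateSet x (t • L)}

/-- `K` and `L` are at a dilation position: the origin lies in `K ∩ L` and
`r(K,L)·L ⊆ K ⊆ R(K,L)·L`. -/
def AtDilationPosition {n : ℕ} (K L : Set (EuclideanSpace ℝ (Fin n))) : Prop :=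
  (0 ∈ K ∧ 0 ∈ L) ∧ inradius K L • L ⊆ K ∧ K ⊆ outradius K L • L

open Set

section NormedSpace

variable {E : Type*} [NormedAddCommGroup E] [NormedSpace ℝ E]

theorem mem_sub_smul_of_add_smul_mem {L : Set E} (hLconv : Convex ℝ L) (hLcpt : IsCompact L)
    (hL : L.Nonempty) {r R : ℝ} (hR : 0 ≤ R) {c : E} (h : ∀ l ∈ L, c + r • l ∈ R • L) :
    c ∈ (R - r) • L := by
  by_contra hc
  obtain ⟨f, u, hfL, hfc⟩ := geometric_hahn_banach_closed_point
    (hLconv.smul (R - r)) (hLcpt.smul (R - r)).isClosed hc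
  obtain ⟨l₀, hl₀, hmax⟩ := hLcpt.exists_isMaxOn hL f.continuous.continuousOn
  obtain ⟨l, hl, hcl⟩ := h l₀ hl₀
  have hfcl : R * f l = f c + r * f l₀ := by simpa using congrArg f hcl
  have hfl₀ : (R - r) * f l₀ < u := by simpa using hfL _ (smul_mem_smul_set hl₀)
  have := mul_le_mul_of_nonneg_left (hmax hl) hR
  linarith

theorem isCompact_setOf_add_smul_mem {K L : Set E} (hK : IsCompact K) {l₀ : E} (hl₀ : l₀ ∈ L)
    (B : ℝ) : IsCompact {p : ℝ × E | p.1 ∈ Icc 0 B ∧ ∀ l ∈ L, p.2 + p.1 • l ∈ K} := by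
  have hC : IsCompact ((fun p : ℝ × E => (p.1, p.2 - p.1 • l₀)) '' Icc 0 B ×ˢ K) :=
    ((isCompact_Icc (a := 0) (b := B)).prod hK).image (by fun_prop)
  refine hC.of_isClosed_subset ?_ ?_
  · simp only [ofPred_and, ofPred_forall]
    exact (isClosed_Icc.preimage continuous_fst).inter
      (isClosed_biInter fun l _ => hK.isClosed.preimage (by fun_prop))
  · rintro ⟨t, w⟩ ⟨ht, hw⟩
    exact ⟨(t, w + t • l₀), ⟨ht, hw l₀ hl₀⟩, by simp⟩

theorem isCompact_setOf_sub_mem_smul {K L : Set E} {k₀ : E} (hk₀ : k₀ ∈ K) (hL : IsCompact L)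
    (B : ℝ) : IsCompact {p : ℝ × E | p.1 ∈ Icc 0 B ∧ ∀ k ∈ K, k - p.2 ∈ p.1 • L} := by
  set P := (fun p : ℝ × E => (p.1, p.1 • p.2)) '' Icc 0 B ×ˢ L
  have hP : IsCompact P := ((isCompact_Icc (a := 0) (b := B)).prod hL).image (by fun_prop)
  have hmem : ∀ t v, (t, v) ∈ P ↔ t ∈ Icc 0 B ∧ v ∈ t • L := by
    simp [P, mem_smul_set, and_assoc, eq_comm]
  have hset : {p : ℝ × E | p.1 ∈ Icc 0 B ∧ ∀ k ∈ K, k - p.2 ∈ p.1 • L} =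
      {p | p.1 ∈ Icc 0 B} ∩ ⋂ k ∈ K, (fun p : ℝ × E => (p.1, k - p.2)) ⁻¹' P := by
    ext ⟨t, w⟩
    simp +contextual [hmem]
  refine (hP.image (f := fun p : ℝ × E => (p.1, k₀ - p.2)) (by fun_prop)).of_isClosed_subset
    ?_ ?_
  · rw [hset]
    exact (isClosed_Icc.preimage continuous_fst).inter
      (isClosed_biInter fun k _ => hP.isClosed.preimage (by fun_prop))
  · rintro ⟨t, w⟩ ⟨ht, hw⟩
    exact ⟨(t, k₀ - w), (hmem _ _).2 ⟨ht, hw k₀ hk₀⟩, by simp⟩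

theorem exists_add_sSup_smul_mem {K L : Set E} (hK : IsCompact K) (hKne : K.Nonempty)
    (hL : L.Nonempty) :
    ∃ a, ∀ l ∈ L, a + sSup {t : ℝ | 0 < t ∧ ∃ w, ∀ l ∈ L, w + t • l ∈ K} • l ∈ K := by
  set S := {t : ℝ | 0 < t ∧ ∃ w, ∀ l ∈ L, w + t • l ∈ K}
  by_cases hS : S.Nonempty ∧ BddAbove S
  · obtain ⟨B, hB⟩ := hS.2
    obtain ⟨l₀, hl₀⟩ := hL
    have hC := isCompact_setOf_add_smul_mem hK hl₀ B
    have hSC : S ⊆ Prod.fst '' {p : ℝ × E | p.1 ∈ Icc 0 B ∧ ∀ l ∈ L, p.2 + p.1 • l ∈ K} := by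
      rintro t ⟨ht, w, hw⟩
      exact ⟨(t, w), ⟨⟨ht.le, hB ⟨ht, w, hw⟩⟩, hw⟩, rfl⟩
    obtain ⟨⟨t, w⟩, ⟨-, hw⟩, rfl⟩ :=
      (hC.image continuous_fst).isClosed.closure_subset_iff.2 hSC (csSup_mem_closure hS.1 hS.2)
    exact ⟨w, hw⟩
  · -- junk value: then `sSup S = 0`, and any point of `K` will do
    have hS0 : sSup S = 0 := by
      rcases not_and_or.1 hS with h | h
      · rw [not_nonempty_iff_eq_empty.1 h, Real.sSup_empty]
      · exact Real.sSup_of_not_bddAbove h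
    obtain ⟨a, ha⟩ := hKne
    exact ⟨a, fun _ _ => by simpa [hS0]⟩

theorem exists_pos_forall_sub_mem_smul {K L : Set E} (hK : Bornology.IsBounded K)
    (hL : (interior L).Nonempty) : ∃ t : ℝ, 0 < t ∧ ∃ w, ∀ k ∈ K, k - w ∈ t • L := by
  obtain ⟨q, hq⟩ := hL
  have hV : (q + ·) ⁻¹' L ∈ nhds (0 : E) :=
    (continuous_const_add q).continuousAt.preimage_mem_nhds
      (by simpa using mem_interior_iff_mem_nhds.1 hq)
  obtain ⟨ρ, hρ, hK⟩ := (NormedSpace.isVonNBounded_of_isBounded ℝ hK hV).exists_pos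
  refine ⟨ρ, hρ, -(ρ • q), fun k hk => ?_⟩
  obtain ⟨v, hv, rfl⟩ := hK ρ (by simp [abs_of_pos hρ]) hk
  exact ⟨q + v, hv, by simp [smul_add, add_comm]⟩

theorem exists_sub_mem_sInf_smul {K L : Set E} (hK : Bornology.IsBounded K)
    (hLcpt : IsCompact L) (hLint : (interior L).Nonempty) :
    ∃ b, ∀ k ∈ K, k - b ∈ sInf {t : ℝ | 0 < t ∧ ∃ w, ∀ k ∈ K, k - w ∈ t • L} • L := by
  rcases K.eq_empty_or_nonempty with rfl | ⟨k₀, hk₀⟩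
  · simp
  set S := {t : ℝ | 0 < t ∧ ∃ w, ∀ k ∈ K, k - w ∈ t • L}
  set R := sInf S
  obtain ⟨t₀, ht₀⟩ := exists_pos_forall_sub_mem_smul hK hLint
  have hC := isCompact_setOf_sub_mem_smul hk₀ hLcpt (R + 1)
  have hSC : Iio (R + 1) ∩ S ⊆
      Prod.fst '' {p : ℝ × E | p.1 ∈ Icc 0 (R + 1) ∧ ∀ k ∈ K, k - p.2 ∈ p.1 • L} := by
    rintro t ⟨htR, ht, w, hw⟩
    exact ⟨(t, w), ⟨⟨ht.le, htR.le⟩, hw⟩, rfl⟩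
  have hR : R ∈ closure (Iio (R + 1) ∩ S) :=
    isOpen_Iio.inter_closure ⟨lt_add_one R, csInf_mem_closure ⟨t₀, ht₀⟩ ⟨0, fun t ht => ht.1.le⟩⟩
  obtain ⟨⟨t, w⟩, ⟨-, hw⟩, rfl⟩ := (hC.image continuous_fst).isClosed.closure_subset_iff.2 hSC hR
  exact ⟨w, hw⟩

end NormedSpace

section Euclidean

variable {n : ℕ}

theorem mem_translateSet {x q : EuclideanSpace ℝ (Fin n)}
    {K : Set (EuclideanSpace ℝ (Fin n))} :
    q ∈ translateSet x K ↔ q - x ∈ K := by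
  simp [translateSet, sub_eq_neg_add]

theorem translateSet_smul_subset_iff {w : EuclideanSpace ℝ (Fin n)} {t : ℝ}
    {K L : Set (EuclideanSpace ℝ (Fin n))} :
    translateSet w (t • L) ⊆ K ↔ ∀ l ∈ L, w + t • l ∈ K := by
  simp only [translateSet, image_subset_iff, smul_set_subset_iff, mem_preimage]

theorem subset_translateSet_smul_iff {w : EuclideanSpace ℝ (Fin n)} {t : ℝ}
    {K L : Set (EuclideanSpace ℝ (Fin n))} :
    K ⊆ translateSet w (t • L) ↔ ∀ k ∈ K, k - w ∈ t • L := by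
  simp only [subset_def, mem_translateSet]

theorem smul_translateSet (t : ℝ) (y : EuclideanSpace ℝ (Fin n))
    (L : Set (EuclideanSpace ℝ (Fin n))) :
    t • translateSet y L = translateSet (t • y) (t • L) := by
  simp only [translateSet, ← image_smul, image_image, smul_add]

theorem inradius_eq_sSup (K L : Set (EuclideanSpace ℝ (Fin n))) :
    inradius K L = sSup {t : ℝ | 0 < t ∧ ∃ w, ∀ l ∈ L, w + t • l ∈ K} := by
  simp only [inradius, translateSet_smul_subset_iff]

theorem outradius_eq_sInf (K L : Set (EuclideanSpace ℝ (Fin n))) :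
    outradius K L = sInf {t : ℝ | 0 < t ∧ ∃ w, ∀ k ∈ K, k - w ∈ t • L} := by
  simp only [outradius, subset_translateSet_smul_iff]

theorem inradius_translateSet (x y : EuclideanSpace ℝ (Fin n))
    (K L : Set (EuclideanSpace ℝ (Fin n))) :
    inradius (translateSet x K) (translateSet y L) = inradius K L := by
  simp only [inradius_eq_sSup, mem_translateSet]
  congr! 4 with t -
  constructor
  · rintro ⟨w, hw⟩
    refine ⟨w + t • y - x, fun l hl => ?_⟩
    convert hw (y + l) (by simpa using hl) using 1
    module
  · rintro ⟨w, hw⟩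
    refine ⟨w - t • y + x, fun l hl => ?_⟩
    convert hw (l - y) hl using 1
    module

theorem outradius_translateSet (x y : EuclideanSpace ℝ (Fin n))
    (K L : Set (EuclideanSpace ℝ (Fin n))) :
    outradius (translateSet x K) (translateSet y L) = outradius K L := by
  simp only [outradius_eq_sInf, smul_translateSet, mem_translateSet]
  congr! 4 with t -
  constructor
  · rintro ⟨w, hw⟩
    refine ⟨w + t • y - x, fun k hk => ?_⟩
    convert hw (x + k) (by simpa using hk) using 1
    module
  · rintro ⟨w, hw⟩
    refine ⟨x + w - t • y, fun k hk => ?_⟩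
    convert hw (k - x) hk using 1
    module

theorem outradius_nonneg (K L : Set (EuclideanSpace ℝ (Fin n))) : 0 ≤ outradius K L :=
  Real.sInf_nonneg fun _ ht => ht.1.le

theorem atDilationPosition_translateSet {K L : Set (EuclideanSpace ℝ (Fin n))}
    {a b l : EuclideanSpace ℝ (Fin n)} (ha : ∀ l ∈ L, a + inradius K L • l ∈ K)
    (hb : ∀ k ∈ K, k - b ∈ outradius K L • L) (hl : l ∈ L)
    (hab : (outradius K L - inradius K L) • l = a - b) :
    AtDilationPosition (translateSet (-(a + inradius K L • l)) K) (translateSet (-l) L) := by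
  refine ⟨⟨?_, ?_⟩, ?_, ?_⟩
  · simpa [mem_translateSet] using ha l hl
  · simpa [mem_translateSet] using hl
  · rw [inradius_translateSet, smul_translateSet, translateSet_smul_subset_iff]
    intro l' hl'
    rw [mem_translateSet]
    convert ha l' hl' using 1
    module
  · rw [outradius_translateSet, smul_translateSet, subset_translateSet_smul_iff]
    intro q hq
    obtain ⟨l', hl', hl'q⟩ := hb _ (mem_translateSet.1 hq)
    exact ⟨l', hl', by linear_combination (norm := module) hl'q - hab⟩

end Euclidean

theorem stmt_2_general (n : ℕ) (K L : Set (EuclideanSpace ℝ (Fin n)))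
    (hKcpt : IsCompact K) (hKint : (interior K).Nonempty)
    (hLconv : Convex ℝ L) (hLcpt : IsCompact L) (hLint : (interior L).Nonempty) :
    ∃ x y : EuclideanSpace ℝ (Fin n),
      AtDilationPosition (translateSet x K) (translateSet y L) := by
  have hL : L.Nonempty := hLint.mono interior_subset
  obtain ⟨a, ha⟩ : ∃ a, ∀ l ∈ L, a + inradius K L • l ∈ K := by
    rw [inradius_eq_sSup]
    exact exists_add_sSup_smul_mem hKcpt (hKint.mono interior_subset) hL
  obtain ⟨b, hb⟩ : ∃ b, ∀ k ∈ K, k - b ∈ outradius K L • L := by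
    rw [outradius_eq_sInf]
    exact exists_sub_mem_sInf_smul hKcpt.isBounded hLcpt hLint
  obtain ⟨l, hl, hab⟩ : a - b ∈ (outradius K L - inradius K L) • L :=
    mem_sub_smul_of_add_smul_mem hLconv hLcpt hL (outradius_nonneg K L) fun l hl => by
      simpa [add_sub_right_comm] using hb _ (ha l hl)
  exact ⟨_, _, atDilationPosition_translateSet ha hb hl hab⟩

/-- any two convex bodies in `ℝⁿ` admit translateSets that are at a
dilation position. -/
theorem stmt_2 (n : ℕ) (K L : Set (EuclideanSpace ℝ (Fin n)))
    (hKconv : Convex ℝ K) (hKcpt : IsCompact K) (hKint : (interior K).Nonempty)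
    (hLconv : Convex ℝ L) (hLcpt : IsCompact L) (hLint : (interior L).Nonempty) :
    ∃ x y : EuclideanSpace ℝ (Fin n),
      AtDilationPosition (translateSet x K) (translateSet y L) :=
  stmt_2_general n K L hKcpt hKint hLconv hLcpt hLint
end

section
/- If convex bodies K and L in ℝⁿ are at a dilation position, then the origin lies in the interior of K ∩ L or on the boundary of both K and L. -/
open Pointwise

/-- The inradius is positive when `K` has interior, `L` is bounded with interior, `n ≥ 1`. -/
lemma inradius_pos {n : ℕ} (hn : 0 < n) (K L : Set (EuclideanSpace ℝ (Fin n)))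
    (hKcpt : IsCompact K) (hKint : (interior K).Nonempty)
    (hLcpt : IsCompact L) (hLint : (interior L).Nonempty) :
    0 < inradius K L := by
  obtain ⟨c, hc⟩ := hKint
  obtain ⟨ε, hε, hball⟩ := Metric.isOpen_iff.mp isOpen_interior c hc
  obtain ⟨M, hM, hLM⟩ := hLcpt.isBounded.subset_closedBall_lt 0 0
  obtain ⟨MK, hMK, hKM⟩ := hKcpt.isBounded.subset_closedBall_lt 0 0
  obtain ⟨y₀, hy₀⟩ := hLint
  obtain ⟨δ, hδ, hball'⟩ := Metric.isOpen_iff.mp isOpen_interior y₀ hy₀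
  set S : Set ℝ := {t : ℝ | 0 < t ∧ ∃ x, translateSet x (t • L) ⊆ K} with hS
  have hmem : ε / (2 * M) ∈ S := by
    refine ⟨by positivity, c, ?_⟩
    rintro p ⟨q, ⟨y, hyL, rfl⟩, rfl⟩
    have h1 : dist (c + (ε / (2 * M)) • y) c < ε := by
      rw [dist_eq_norm]
      have : c + (ε / (2 * M)) • y - c = (ε / (2 * M)) • y := by abel
      rw [this, norm_smul, Real.norm_eq_abs, abs_of_pos (by positivity)]
      have hy : ‖y‖ ≤ M := by simpa using hLM hyL
      calc ε / (2 * M) * ‖y‖ ≤ ε / (2 * M) * M := by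
            exact mul_le_mul_of_nonneg_left hy (by positivity)
        _ = ε / 2 := by field_simp
        _ < ε := by linarith
    exact interior_subset (hball (Metric.mem_ball.mpr h1))
  have hbdd : BddAbove S := by
    refine ⟨2 * MK / δ, ?_⟩
    rintro t ⟨ht, x, hx⟩
    set e : EuclideanSpace ℝ (Fin n) := EuclideanSpace.single (⟨0, hn⟩ : Fin n) (1 : ℝ) with he
    have hne : ‖e‖ = 1 := by simp [he, EuclideanSpace.norm_single]
    have hmem₁ : y₀ + (δ / 2) • e ∈ L := by
      apply fun h => interior_subset (hball' h)
      rw [Metric.mem_ball, dist_eq_norm]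
      have : y₀ + (δ / 2) • e - y₀ = (δ / 2) • e := by abel
      rw [this, norm_smul, Real.norm_eq_abs, abs_of_pos (by positivity), hne]
      linarith
    have hmem₂ : y₀ - (δ / 2) • e ∈ L := by
      apply fun h => interior_subset (hball' h)
      rw [Metric.mem_ball, dist_eq_norm]
      have : y₀ - (δ / 2) • e - y₀ = -((δ / 2) • e) := by abel
      rw [this, norm_neg, norm_smul, Real.norm_eq_abs, abs_of_pos (by positivity), hne]
      linarith
    have hp₁ : x + t • (y₀ + (δ / 2) • e) ∈ K := hx ⟨_, ⟨_, hmem₁, rfl⟩, rfl⟩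
    have hp₂ : x + t • (y₀ - (δ / 2) • e) ∈ K := hx ⟨_, ⟨_, hmem₂, rfl⟩, rfl⟩
    have hdiff : (x + t • (y₀ + (δ / 2) • e)) - (x + t • (y₀ - (δ / 2) • e))
        = (t * δ) • e := by module
    have hnorm : ‖(x + t • (y₀ + (δ / 2) • e)) - (x + t • (y₀ - (δ / 2) • e))‖ = t * δ := by
      rw [hdiff, norm_smul, Real.norm_eq_abs, abs_of_pos (by positivity), hne, mul_one]
    have hle : t * δ ≤ 2 * MK := by
      rw [← hnorm]
      calc ‖(x + t • (y₀ + (δ / 2) • e)) - (x + t • (y₀ - (δ / 2) • e))‖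
          ≤ ‖x + t • (y₀ + (δ / 2) • e)‖ + ‖x + t • (y₀ - (δ / 2) • e)‖ := norm_sub_le _ _
        _ ≤ MK + MK := by
            have h1 : ‖x + t • (y₀ + (δ / 2) • e)‖ ≤ MK := by simpa using hKM hp₁
            have h2 : ‖x + t • (y₀ - (δ / 2) • e)‖ ≤ MK := by simpa using hKM hp₂
            linarith
        _ = 2 * MK := by ring
    rw [le_div_iff₀ hδ]
    linarith
  calc (0 : ℝ) < ε / (2 * M) := by positivity
    _ ≤ inradius K L := le_csSup hbdd hmem

/-- if convex bodies `K` and `L` in `ℝⁿ` are at a dilation position, then the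
origin lies in the interior of `K ∩ L` or on the boundary of both `K` and `L`. -/
theorem stmt_3 (n : ℕ) (K L : Set (EuclideanSpace ℝ (Fin n)))
    (hKconv : Convex ℝ K) (hKcpt : IsCompact K) (hKint : (interior K).Nonempty)
    (hLconv : Convex ℝ L) (hLcpt : IsCompact L) (hLint : (interior L).Nonempty)
    (hdil : AtDilationPosition K L) :
    0 ∈ interior (K ∩ L) ∨ ((0 : EuclideanSpace ℝ (Fin n)) ∈ frontier K ∧
      (0 : EuclideanSpace ℝ (Fin n)) ∈ frontier L) := by
  obtain ⟨⟨h0K, h0L⟩, hrsub, hRsub⟩ := hdil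
  by_cases hK : (0 : EuclideanSpace ℝ (Fin n)) ∈ interior K
  · by_cases hL : (0 : EuclideanSpace ℝ (Fin n)) ∈ interior L
    · left; rw [interior_inter]; exact ⟨hK, hL⟩
    · -- 0 ∈ int K but 0 ∉ int L : contradiction via K ⊆ R • L
      exfalso
      by_cases hR : outradius K L = 0
      · rw [hR, Set.zero_smul_set ⟨0, h0L⟩] at hRsub
        have h1 : interior K = {0} := by
          apply subset_antisymm
          · intro p hp
            simpa using hRsub (interior_subset hp)
          · simpa using hK
        have hopen : IsOpen ({0} : Set (EuclideanSpace ℝ (Fin n))) := h1 ▸ isOpen_interior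
        exact hL (interior_maximal (Set.singleton_subset_iff.mpr h0L) hopen rfl)
      · have h2 : interior K ⊆ interior (outradius K L • L) := interior_mono hRsub
        rw [interior_smul₀ hR] at h2
        obtain ⟨y, hy, hy0⟩ := h2 hK
        have : y = 0 := by
          rcases smul_eq_zero.mp hy0 with h | h
          · exact absurd h hR
          · exact h
        exact hL (this ▸ hy)
  · by_cases hL : (0 : EuclideanSpace ℝ (Fin n)) ∈ interior L
    · -- 0 ∈ int L but 0 ∉ int K : contradiction via r • L ⊆ K
      exfalso
      rcases Nat.eq_zero_or_pos n with hn | hn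
      · subst hn
        obtain ⟨y, hy⟩ := hKint
        have : y = (0 : EuclideanSpace ℝ (Fin 0)) := by
          ext i; exact absurd i.2 (by omega)
        exact hK (this ▸ hy)
      · have hr : 0 < inradius K L := inradius_pos hn K L hKcpt hKint hLcpt hLint
        have h2 : (0 : EuclideanSpace ℝ (Fin n)) ∈ interior (inradius K L • L) := by
          rw [interior_smul₀ (ne_of_gt hr)]
          exact ⟨0, hL, smul_zero _⟩
        exact hK (interior_mono hrsub h2)
    · right
      rw [hKcpt.isClosed.frontier_eq, hLcpt.isClosed.frontier_eq]
      exact ⟨⟨h0K, hK⟩, ⟨h0L, hL⟩⟩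
end
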